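/- arXiv:2202.06374 — 3 statements merged into one kernel-verified Lean document; each statement's English description precedes it below -/
import Mathlib

section
/- Let ℓ(n) = k₁n + k₂(n)(N−n) with k₁ > 0 constant and suppose k₂(0) ≤ k₁. If there exists M ∈ (0, N) such that ((N−M)/N)(k₁ − k₂(M)) > k₁ − k₂(0), then ℓ(M) < ℓ(0) and ℓ(M) < ℓ(N); hence ℓ attains a minimum over {0, 1, ..., N} at some N* with 0 < N* < N. -/
/-!
Clearing denominators, the fractional hypothesis says exactly `ℓ M < ℓ 0`, and `k₂ 0 ≤ k₁` says
`ℓ 0 = k₂ 0 N ≤ k₁ N = ℓ N`. A minimiser of `ℓ` on `{0, …, N}` is no worse than `M`, so it is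
neither endpoint.
-/

theorem exists_mem_Ioo_isMinOn_Icc {ι α : Type*} [LinearOrder ι] [LocallyFiniteOrder ι]
    [LinearOrder α] (f : ι → α) {a b m : ι} (ham : a ≤ m) (hmb : m ≤ b)
    (ha : f m < f a) (hb : f m < f b) :
    ∃ n ∈ Set.Ioo a b, IsMinOn f (Set.Icc a b) n := by
  have hm : m ∈ Finset.Icc a b := Finset.mem_Icc.2 ⟨ham, hmb⟩
  obtain ⟨n, hn, hmin⟩ := (Finset.Icc a b).exists_min_image f ⟨m, hm⟩
  obtain ⟨han, hnb⟩ := Finset.mem_Icc.1 hn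
  have hnm : f n ≤ f m := hmin m hm
  refine ⟨n, ⟨han.lt_of_ne ?_, hnb.lt_of_ne ?_⟩, fun i hi => hmin i (Finset.mem_Icc.2 hi)⟩
  · rintro rfl
    exact hnm.not_gt ha
  · rintro rfl
    exact hnm.not_gt hb

noncomputable def holdoutCost (N : ℕ) (k₁ : ℝ) (k₂ : ℕ → ℝ) (n : ℕ) : ℝ :=
  k₁ * n + k₂ n * ((N : ℝ) - n)

section holdoutCost

variable {N : ℕ} {k₁ : ℝ} {k₂ : ℕ → ℝ}

theorem holdoutCost_lt_holdoutCost_zero_iff (hN : 0 < N) (M : ℕ) :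
    holdoutCost N k₁ k₂ M < holdoutCost N k₁ k₂ 0 ↔
      k₁ - k₂ 0 < ((N : ℝ) - M) / N * (k₁ - k₂ M) := by
  have hN' : (0 : ℝ) < N := by exact_mod_cast hN
  rw [div_mul_eq_mul_div, lt_div_iff₀ hN']
  simp only [holdoutCost, Nat.cast_zero]
  constructor <;> intro h <;> linarith

theorem holdoutCost_zero_le_holdoutCost_self (hk₂0 : k₂ 0 ≤ k₁) :
    holdoutCost N k₁ k₂ 0 ≤ holdoutCost N k₁ k₂ N := by
  simp only [holdoutCost, Nat.cast_zero, sub_zero, sub_self, mul_zero, zero_add, add_zero]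
  exact mul_le_mul_of_nonneg_right hk₂0 N.cast_nonneg

end holdoutCost

theorem ohs_exists_weak_general
    (N M : ℕ) (k₁ : ℝ) (k₂ : ℕ → ℝ)
    (hMN : M < N)
    (hk₂0 : k₂ 0 ≤ k₁)
    (hfrac : ((N : ℝ) - M) / N * (k₁ - k₂ M) > k₁ - k₂ 0) :
    (k₁ * M + k₂ M * ((N : ℝ) - M) < k₁ * 0 + k₂ 0 * ((N : ℝ) - 0)) ∧
    (k₁ * M + k₂ M * ((N : ℝ) - M) < k₁ * N + k₂ N * ((N : ℝ) - N)) ∧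
    ∃ Nstar : ℕ, 0 < Nstar ∧ Nstar < N ∧
      ∀ i ≤ N, k₁ * Nstar + k₂ Nstar * ((N : ℝ) - Nstar) ≤ k₁ * i + k₂ i * ((N : ℝ) - i) := by
  have h0 : holdoutCost N k₁ k₂ M < holdoutCost N k₁ k₂ 0 :=
    (holdoutCost_lt_holdoutCost_zero_iff (M.zero_le.trans_lt hMN) M).2 hfrac
  have hN : holdoutCost N k₁ k₂ M < holdoutCost N k₁ k₂ N :=
    h0.trans_le (holdoutCost_zero_le_holdoutCost_self hk₂0)
  obtain ⟨Nstar, ⟨h0Nstar, hNstarN⟩, hmin⟩ :=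
    exists_mem_Ioo_isMinOn_Icc (holdoutCost N k₁ k₂) M.zero_le hMN.le h0 hN
  refine ⟨by simpa [holdoutCost] using h0, hN, Nstar, h0Nstar, hNstarN, fun i hi => ?_⟩
  exact hmin ⟨i.zero_le, hi⟩

/-- `ℓ n = k₁ n + k₂ n (N - n)` on `{0, …, N}` with `k₂ 0 ≤ k₁`.  If some
`M ∈ (0, N)` satisfies `((N - M)/N) (k₁ - k₂ M) > k₁ - k₂ 0`, then `ℓ M < ℓ 0` and `ℓ M < ℓ N`,
hence `ℓ` attains its minimum over `{0, …, N}` at some `N*` with `0 < N* < N`. -/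
theorem ohs_exists_weak
    (N M : ℕ) (k₁ : ℝ) (k₂ : ℕ → ℝ)
    (hk₁ : 0 < k₁) (hM0 : 0 < M) (hMN : M < N)
    (hk₂0 : k₂ 0 ≤ k₁)
    (hfrac : ((N : ℝ) - M) / N * (k₁ - k₂ M) > k₁ - k₂ 0) :
    (k₁ * M + k₂ M * ((N : ℝ) - M) < k₁ * 0 + k₂ 0 * ((N : ℝ) - 0)) ∧
    (k₁ * M + k₂ M * ((N : ℝ) - M) < k₁ * N + k₂ N * ((N : ℝ) - N)) ∧
    ∃ Nstar : ℕ, 0 < Nstar ∧ Nstar < N ∧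
      ∀ i ≤ N, k₁ * Nstar + k₂ Nstar * ((N : ℝ) - Nstar) ≤ k₁ * i + k₂ i * ((N : ℝ) - i) :=
  ohs_exists_weak_general N M k₁ k₂ hMN hk₂0 hfrac
end

section
/- Let A be a symmetric invertible m×m real matrix, x ∈ ℝᵐ, and let I¹ denote the m×m matrix with (I¹)ᵢⱼ = 1 if i = j = 1 and 0 otherwise. Let A_x denote the matrix A with its first row replaced by xᵀ. Then for p in any interval containing 0 on which A + pI¹ is invertible, d/dp [ xᵀ(A + pI¹)⁻¹x ] = − det(A_x)² / det(A + pI¹)². -/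
/-!
With `B = A + p I¹` we have `d/dp B⁻¹ = -B⁻¹ I¹ B⁻¹`, so by symmetry of `B⁻¹` the derivative is
`-((B⁻¹ x)₀)²`. Cramer's rule (again using symmetry, to trade the column for a row) gives
`det B · (B⁻¹ x)₀ = det (B with row 0 replaced by x)`, and replacing row 0 erases the perturbation
`p I¹`, leaving `det A_x`.
-/

open Matrix

namespace Matrix

variable {n α : Type*} [DecidableEq n]

theorem updateRow_add_smul_single_self {R : Type*} [AddZeroClass α] [SMulZeroClass R α]
    (A : Matrix n n α) (i j : n) (c : R) (a : α) (x : n → α) :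
    (A + c • single i j a).updateRow i x = A.updateRow i x := by
  ext k l
  rcases eq_or_ne k i with rfl | hk
  · simp
  · simp [updateRow_ne hk, hk.symm]

theorem isSymm_single_self [Zero α] (i : n) (a : α) : (single i i a).IsSymm :=
  transpose_single i i a

variable [Fintype n]

theorem IsSymm.det_mul_inv_mulVec_apply [CommRing α] {B : Matrix n n α} (hB : B.IsSymm)
    (hdet : IsUnit B.det) (x : n → α) (i : n) :
    B.det * (B⁻¹ *ᵥ x) i = (B.updateRow i x).det := by
  rw [← cramer_transpose_apply, hB.eq, ← det_smul_inv_mulVec_eq_cramer B x hdet]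
  rfl

theorem IsSymm.dotProduct_mul_single_mul_mulVec [CommSemiring α] {C : Matrix n n α}
    (hC : C.IsSymm) (x : n → α) (i : n) :
    x ⬝ᵥ ((C * single i i 1 * C) *ᵥ x) = (C *ᵥ x) i ^ 2 := by
  rw [← mulVec_mulVec, ← mulVec_mulVec, dotProduct_mulVec, ← mulVec_transpose, hC.eq,
    single_mulVec, one_mul]
  exact (dotProduct_single _ _ _).trans (sq _).symm

end Matrix

section Calculus

variable {n 𝕜 : Type*} [Fintype n] [DecidableEq n] [RCLike 𝕜]

-- The statements below only see the product topology on matrices; the operator norm is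
-- needed inside the proofs to make `Matrix n n 𝕜` a complete normed algebra.
attribute [local instance] Matrix.linftyOpNormedAddCommGroup Matrix.linftyOpNormedRing
  Matrix.linftyOpNormedAlgebra

theorem Matrix.hasDerivAt_add_smul (A E : Matrix n n 𝕜) (p : 𝕜) :
    HasDerivAt (fun q => A + q • E) E p :=
  (((hasDerivAt_id p).smul_const E).const_add A).congr_deriv (one_smul 𝕜 E)

theorem HasDerivAt.matrix_inv {M : 𝕜 → Matrix n n 𝕜} {M' : Matrix n n 𝕜} {p : 𝕜}
    (hM : HasDerivAt M M' p) (hdet : IsUnit (M p).det) :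
    HasDerivAt (fun q => (M q)⁻¹) (-((M p)⁻¹ * M' * (M p)⁻¹)) p := by
  have hunit : IsUnit (M p) := (isUnit_iff_isUnit_det _).mpr hdet
  have hinv := hasFDerivAt_ringInverse (𝕜 := 𝕜) hunit.unit
  rw [hunit.unit_spec] at hinv
  have h := hinv.comp_hasDerivAt p hM
  simp only [Function.comp_def, ← nonsing_inv_eq_ringInverse, coe_units_inv,
    hunit.unit_spec] at h
  exact h

theorem HasDerivAt.dotProduct_mulVec {M : 𝕜 → Matrix n n 𝕜} {M' : Matrix n n 𝕜} {p : 𝕜}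
    (hM : HasDerivAt M M' p) (x : n → 𝕜) :
    HasDerivAt (fun q => x ⬝ᵥ (M q *ᵥ x)) (x ⬝ᵥ (M' *ᵥ x)) p :=
  let L : Matrix n n 𝕜 →ₗ[𝕜] 𝕜 :=
    { toFun := fun N => x ⬝ᵥ (N *ᵥ x)
      map_add' := fun N N' => by simp [add_mulVec, dotProduct_add]
      map_smul' := fun c N => by simp [smul_mulVec] }
  (LinearMap.toContinuousLinearMap L).hasFDerivAt.comp_hasDerivAt p hM

end Calculus

theorem deriv_quadratic_form_inverse_general
    (m : ℕ) (A : Matrix (Fin (m + 1)) (Fin (m + 1)) ℝ) (x : Fin (m + 1) → ℝ)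
    (hA : A.IsSymm)
    (p : ℝ) (hp : IsUnit (A + p • single (0 : Fin (m + 1)) 0 (1:ℝ)).det) :
    HasDerivAt
      (fun q : ℝ => x ⬝ᵥ ((A + q • single (0 : Fin (m + 1)) 0 (1:ℝ))⁻¹ *ᵥ x))
      (-(A.updateRow 0 x).det ^ 2
        / (A + p • single (0 : Fin (m + 1)) 0 (1:ℝ)).det ^ 2) p := by
  set E : Matrix (Fin (m + 1)) (Fin (m + 1)) ℝ := single 0 0 1
  set B := A + p • E
  have hB : B.IsSymm := hA.add ((isSymm_single_self 0 1).smul p)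
  have hcramer : B.det * (B⁻¹ *ᵥ x) 0 = (A.updateRow 0 x).det := by
    rw [hB.det_mul_inv_mulVec_apply hp, updateRow_add_smul_single_self]
  refine (((hasDerivAt_add_smul A E p).matrix_inv hp).dotProduct_mulVec x).congr_deriv ?_
  change x ⬝ᵥ -(B⁻¹ * E * B⁻¹) *ᵥ x = _
  rw [neg_mulVec, dotProduct_neg, hB.inv.dotProduct_mul_single_mul_mulVec, ← hcramer]
  field_simp [hp.ne_zero]

/-- For a symmetric invertible `m × m` real matrix `A`, a vector `x`, and
`I¹ = stdBasisMatrix 0 0 1`, whenever `A + p • I¹` is invertible we have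
`d/dp [xᵀ (A + p I¹)⁻¹ x] = - det(A_x)² / det(A + p I¹)²`, where `A_x` is `A` with its first
row replaced by `x`. -/
theorem deriv_quadratic_form_inverse
    (m : ℕ) (A : Matrix (Fin (m + 1)) (Fin (m + 1)) ℝ) (x : Fin (m + 1) → ℝ)
    (hA : A.IsSymm) (hAinv : IsUnit A.det)
    (p : ℝ) (hp : IsUnit (A + p • single (0 : Fin (m + 1)) 0 (1:ℝ)).det) :
    HasDerivAt
      (fun q : ℝ => x ⬝ᵥ ((A + q • single (0 : Fin (m + 1)) 0 (1:ℝ))⁻¹ *ᵥ x))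
      (-(A.updateRow 0 x).det ^ 2
        / (A + p • single (0 : Fin (m + 1)) 0 (1:ℝ)).det ^ 2) p :=
  deriv_quadratic_form_inverse_general m A x hA p hp
end

section
/- Combining the drift lower bounds and the approximation upper bound: suppose sup|ρ − f₁| ≤ ε, sup|f_{1+δ} − f₁| ≤ αδ, |f₀ − f₁| ≥ γ₁ on a set of μ₁-measure κ₁, and μ is α₂-Lipschitz in total variation. If δ < γ₁κ₁/(2α + γ₁α₂) and ε < γ₁(κ₁ − α₂δ) − 2αδ, then ∫|ρ − f_{1+δ}| dμ_{1+δ} < ∫|f₀ − f_{1+δ}| dμ_{1+δ}, i.e., the freshly fitted score ρ strictly dominates the stale score f₀ in L¹ error. -/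
open MeasureTheory Set

/-- Combining the drift lower bound and the approximation upper bound: if
`sup |ρ - f₁| ≤ ε`, `sup |f_{1+δ} - f₁| ≤ α δ`, `|f₀ - f₁| ≥ γ₁` on a set of `μ₁`-measure `κ₁`,
the covariate distribution drifts at most `α₂ δ` in total variation, `δ < γ₁κ₁/(2α + γ₁α₂)` and
`ε < γ₁ (κ₁ - α₂ δ) - 2 α δ`, then the freshly fitted score `ρ` strictly dominates the stale
score `f₀` in `L¹` error against the drifted truth `f_{1+δ}` under `μ_{1+δ}`. -/
theorem holdout_update_dominates
    {X : Type*} [MeasurableSpace X]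
    (μ₁ μ₁δ : Measure X) [IsProbabilityMeasure μ₁] [IsProbabilityMeasure μ₁δ]
    (f₀ f₁ f₁δ ρ : X → ℝ) (γ₁ κ₁ α α₂ δ ε : ℝ)
    (hγ : 0 < γ₁) (hκ : 0 < κ₁) (hα : 0 ≤ α) (hα₂ : 0 ≤ α₂) (hδ : 0 ≤ δ) (hε : 0 ≤ ε)
    (hm₀ : Measurable f₀) (hm₁ : Measurable f₁) (hm₁δ : Measurable f₁δ) (hmρ : Measurable ρ)
    (hb₀ : ∀ x, f₀ x ∈ Icc (0:ℝ) 1) (hb₁ : ∀ x, f₁ x ∈ Icc (0:ℝ) 1)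
    (hb₁δ : ∀ x, f₁δ x ∈ Icc (0:ℝ) 1) (hbρ : ∀ x, ρ x ∈ Icc (0:ℝ) 1)
    (S : Set X) (hS : MeasurableSet S)
    (hdrift : ∀ x ∈ S, γ₁ ≤ |f₀ x - f₁ x|)
    (hκS : (μ₁ S).toReal = κ₁)
    (hLip : ∀ x, |f₁δ x - f₁ x| ≤ α * δ)
    (hTV : ∀ B : Set X, MeasurableSet B → |(μ₁ B).toReal - (μ₁δ B).toReal| ≤ α₂ * δ)
    (hρ : ∀ x, |ρ x - f₁ x| ≤ ε)
    (hδsmall : δ < γ₁ * κ₁ / (2 * α + γ₁ * α₂))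
    (hεsmall : ε < γ₁ * (κ₁ - α₂ * δ) - 2 * α * δ) :
    (∫ x, |ρ x - f₁δ x| ∂μ₁δ) < ∫ x, |f₀ x - f₁δ x| ∂μ₁δ := by

  have hint : ∀ (g h : X → ℝ), Measurable g → Measurable h →
      (∀ x, g x ∈ Icc (0:ℝ) 1) → (∀ x, h x ∈ Icc (0:ℝ) 1) →
      Integrable (fun x => |g x - h x|) μ₁δ := by
    intro g h hg hh hbg hbh
    refine Integrable.mono' (integrable_const 1) ((hg.sub hh).abs).aestronglyMeasurable ?_
    filter_upwards with x
    have h1 := (hbg x).1; have h2 := (hbg x).2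
    have h3 := (hbh x).1; have h4 := (hbh x).2
    simp only [Real.norm_eq_abs, abs_abs]
    rw [abs_sub_le_iff]; constructor <;> linarith
  have hκ1 : κ₁ ≤ 1 := by
    rw [← hκS]
    calc (μ₁ S).toReal ≤ (1 : ENNReal).toReal :=
          ENNReal.toReal_mono ENNReal.one_ne_top prob_le_one
      _ = 1 := by simp
  have hμS : κ₁ - α₂ * δ ≤ (μ₁δ S).toReal := by
    have h := abs_le.1 (hTV S hS)
    rw [hκS] at h
    linarith [h.2]
  have hμS1 : (μ₁δ S).toReal ≤ 1 := by
    calc (μ₁δ S).toReal ≤ (1 : ENNReal).toReal :=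
          ENNReal.toReal_mono ENNReal.one_ne_top prob_le_one
      _ = 1 := by simp
  have hκδpos : 0 < κ₁ - α₂ * δ := by nlinarith
  have hγαδ : α * δ ≤ γ₁ := by nlinarith
  have hup : (∫ x, |ρ x - f₁δ x| ∂μ₁δ) ≤ ε + α * δ := by
    have hb : ∀ x, |ρ x - f₁δ x| ≤ ε + α * δ := by
      intro x
      have h1 := hρ x
      have h2 := hLip x
      have h3 : |ρ x - f₁δ x| ≤ |ρ x - f₁ x| + |f₁ x - f₁δ x| := abs_sub_le _ _ _
      rw [abs_sub_comm (f₁ x)] at h3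
      linarith
    calc (∫ x, |ρ x - f₁δ x| ∂μ₁δ) ≤ ∫ _x, (ε + α * δ) ∂μ₁δ :=
          integral_mono (hint ρ f₁δ hmρ hm₁δ hbρ hb₁δ) (integrable_const _) hb
      _ = ε + α * δ := by simp
  have hlow : (γ₁ - α * δ) * (μ₁δ S).toReal ≤ ∫ x, |f₀ x - f₁δ x| ∂μ₁δ := by
    have hIf : Integrable (fun x => |f₀ x - f₁δ x|) μ₁δ := hint f₀ f₁δ hm₀ hm₁δ hb₀ hb₁δ
    calc (γ₁ - α * δ) * (μ₁δ S).toReal = ∫ _x in S, (γ₁ - α * δ) ∂μ₁δ := by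
          rw [setIntegral_const, smul_eq_mul, mul_comm]; rfl
      _ ≤ ∫ x in S, |f₀ x - f₁δ x| ∂μ₁δ := by
          refine setIntegral_mono_on (integrableOn_const (measure_ne_top _ _))
            hIf.integrableOn hS ?_
          intro x hx
          have h1 := hdrift x hx
          have h2 := hLip x
          have h3 : |f₀ x - f₁ x| ≤ |f₀ x - f₁δ x| + |f₁δ x - f₁ x| := abs_sub_le _ _ _
          linarith
      _ ≤ ∫ x, |f₀ x - f₁δ x| ∂μ₁δ :=
          setIntegral_le_integral hIf (Filter.Eventually.of_forall fun x => abs_nonneg _)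
  have hkey : ε + α * δ < (γ₁ - α * δ) * (μ₁δ S).toReal := by
    have h1 : (γ₁ - α * δ) * (κ₁ - α₂ * δ) ≤ (γ₁ - α * δ) * (μ₁δ S).toReal :=
      mul_le_mul_of_nonneg_left hμS (by linarith)
    have h2 : α * δ * (κ₁ - α₂ * δ) ≤ α * δ * 1 :=
      mul_le_mul_of_nonneg_left (by linarith) (by positivity)
    nlinarith
  linarith
end
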